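/- Non-negativity of β for bipartite channels: let 𝒩 : M_{d_A d_B}(ℂ) → M_{d_{A'} d_{B'}}(ℂ) be a quantum channel with Choi operator Γ^𝒩 on systems A A' B B'. Suppose λ ≥ 0 and Hermitian operators S, V on A A' B B' satisfy: (1/d_A) Tr_{AA'B'}[S] ≤ λ I_B, T_{BB'}(V + Γ^𝒩) ≥ 0, T_{BB'}(V - Γ^𝒩) ≥ 0, S + V ≥ 0, and S - V ≥ 0. Then λ ≥ 1. -/

import Mathlib

open Matrix
open scoped ComplexOrder

/-!
Everything follows by taking traces. Trace preservation gives `Tr Γ^𝒩 = d_A d_B`; since the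
partial transpose preserves the trace, `T_{BB'}(V - Γ^𝒩) ≥ 0` gives `Tr V ≥ d_A d_B`, and
`S - V ≥ 0` gives `Tr S ≥ Tr V`. On the other hand, tracing `λ I_B - Tr_{AA'B'}[S] / d_A ≥ 0`
gives `Tr S ≤ λ d_A d_B`, hence `λ ≥ 1`.
-/

/-- The Choi matrix `Γ^𝒩` of a linear map, on the systems `(A B) × (A' B')`. -/
noncomputable def choiMatrix {α β : Type*} [Fintype α] [DecidableEq α]
    (P : Matrix α α ℂ →ₗ[ℂ] Matrix β β ℂ) : Matrix (α × β) (α × β) ℂ :=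
  Matrix.of fun p q => P (Matrix.single p.1 q.1 1) p.2 q.2

/-- The partial transpose `T_{BB'}` on the systems `B` and `B'`, for an operator on the
four-party system `A A' B B'` indexed as `(A × B) × (A' × B')`. -/
def partialTransposeBB' {dA dB dA' dB' : ℕ}
    (X : Matrix ((Fin dA × Fin dB) × (Fin dA' × Fin dB'))
               ((Fin dA × Fin dB) × (Fin dA' × Fin dB')) ℂ) :
    Matrix ((Fin dA × Fin dB) × (Fin dA' × Fin dB'))
           ((Fin dA × Fin dB) × (Fin dA' × Fin dB')) ℂ :=
  Matrix.of fun p q =>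
    X ((p.1.1, q.1.2), (p.2.1, q.2.2)) ((q.1.1, p.1.2), (q.2.1, p.2.2))

/-- The partial trace over systems `A`, `A'`, and `B'`, leaving an operator on `B`. -/
noncomputable def partialTraceAA'B' {dA dB dA' dB' : ℕ}
    (X : Matrix ((Fin dA × Fin dB) × (Fin dA' × Fin dB'))
               ((Fin dA × Fin dB) × (Fin dA' × Fin dB')) ℂ) :
    Matrix (Fin dB) (Fin dB) ℂ :=
  Matrix.of fun b e =>
    ∑ a : Fin dA, ∑ a' : Fin dA', ∑ b' : Fin dB',
      X ((a, b), (a', b')) ((a, e), (a', b'))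

theorem Matrix.PosSemidef.trace_le_of_sub {n R : Type*} [Fintype n] [Ring R] [PartialOrder R]
    [StarRing R] [AddLeftMono R] {A B : Matrix n n R}
    (h : (A - B).PosSemidef) : B.trace ≤ A.trace := by
  simpa [trace_sub, sub_nonneg] using h.trace_nonneg

theorem trace_choiMatrix {α β : Type*} [Fintype α] [DecidableEq α] [Fintype β]
    (P : Matrix α α ℂ →ₗ[ℂ] Matrix β β ℂ) (hP : ∀ X, (P X).trace = X.trace) :
    (choiMatrix P).trace = Fintype.card α := by
  calc (choiMatrix P).trace = ∑ i, (P (single i i 1)).trace := by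
        simp [trace, choiMatrix, Fintype.sum_prod_type]
    _ = Fintype.card α := by simp [hP]

section Partial

variable {dA dB dA' dB' : ℕ}
    (X : Matrix ((Fin dA × Fin dB) × (Fin dA' × Fin dB'))
               ((Fin dA × Fin dB) × (Fin dA' × Fin dB')) ℂ)

theorem trace_partialTransposeBB' : (partialTransposeBB' X).trace = X.trace := by
  simp [trace, partialTransposeBB']

theorem trace_partialTraceAA'B' : (partialTraceAA'B' X).trace = X.trace := by
  simp only [trace, diag, partialTraceAA'B', of_apply, Fintype.sum_prod_type]
  exact Finset.sum_comm

end Partial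

theorem bipartite_beta_nonneg_general {dA dB dA' dB' : ℕ}
    (hdA : 0 < dA) (hdB : 0 < dB)
    (N : Matrix (Fin dA × Fin dB) (Fin dA × Fin dB) ℂ →ₗ[ℂ]
         Matrix (Fin dA' × Fin dB') (Fin dA' × Fin dB') ℂ)
    (hTP : ∀ X : Matrix (Fin dA × Fin dB) (Fin dA × Fin dB) ℂ, (N X).trace = X.trace)
    (lam : ℝ)
    (S V : Matrix ((Fin dA × Fin dB) × (Fin dA' × Fin dB'))
                 ((Fin dA × Fin dB) × (Fin dA' × Fin dB')) ℂ)
    (hObj : (((lam : ℂ) • (1 : Matrix (Fin dB) (Fin dB) ℂ))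
              - ((dA : ℂ))⁻¹ • partialTraceAA'B' S).PosSemidef)
    (h2 : (partialTransposeBB' (V - choiMatrix N)).PosSemidef)
    (h4 : (S - V).PosSemidef) :
    1 ≤ lam := by
  have hS_le : S.trace ≤ dA * (lam * dB) := by
    have h := hObj.trace_le_of_sub
    simp only [trace_smul, trace_one, trace_partialTraceAA'B', smul_eq_mul,
      Fintype.card_fin] at h
    rwa [inv_mul_le_iff₀ (by exact_mod_cast hdA)] at h
  have h_trace : ((dA * dB : ℝ) : ℂ) ≤ ((dA * dB * lam : ℝ) : ℂ) := by
    push_cast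
    calc (dA * dB : ℂ) = (choiMatrix N).trace := by simp [trace_choiMatrix N hTP]
      _ ≤ V.trace := by simpa [trace_partialTransposeBB', trace_sub] using h2.trace_nonneg
      _ ≤ S.trace := h4.trace_le_of_sub
      _ ≤ dA * dB * lam := by linear_combination hS_le
  have hdAdB : (0 : ℝ) < dA * dB := by positivity
  exact le_of_mul_le_mul_left (by simpa using Complex.real_le_real.mp h_trace) hdAdB

/-- Non-negativity of β for bipartite channels: if `𝒩` is a bipartite
quantum channel (completely positive and trace preserving), `λ ≥ 0`, and Hermitian `S, V`
satisfy `(1/d_A) Tr_{AA'B'}[S] ≤ λ I_B`, `T_{BB'}(V ± Γ^𝒩) ≥ 0`, and `S ± V ≥ 0`,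
then `λ ≥ 1`. -/
theorem bipartite_beta_nonneg {dA dB dA' dB' : ℕ}
    (hdA : 0 < dA) (hdB : 0 < dB) (hdA' : 0 < dA') (hdB' : 0 < dB')
    (N : Matrix (Fin dA × Fin dB) (Fin dA × Fin dB) ℂ →ₗ[ℂ]
         Matrix (Fin dA' × Fin dB') (Fin dA' × Fin dB') ℂ)
    (hCP : (choiMatrix N).PosSemidef)
    (hTP : ∀ X : Matrix (Fin dA × Fin dB) (Fin dA × Fin dB) ℂ, (N X).trace = X.trace)
    (lam : ℝ) (hlam : 0 ≤ lam)
    (S V : Matrix ((Fin dA × Fin dB) × (Fin dA' × Fin dB'))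
                 ((Fin dA × Fin dB) × (Fin dA' × Fin dB')) ℂ)
    (hS : S.IsHermitian) (hV : V.IsHermitian)
    (hObj : (((lam : ℂ) • (1 : Matrix (Fin dB) (Fin dB) ℂ))
              - ((dA : ℂ))⁻¹ • partialTraceAA'B' S).PosSemidef)
    (h1 : (partialTransposeBB' (V + choiMatrix N)).PosSemidef)
    (h2 : (partialTransposeBB' (V - choiMatrix N)).PosSemidef)
    (h3 : (S + V).PosSemidef)
    (h4 : (S - V).PosSemidef) :
    1 ≤ lam :=
  bipartite_beta_nonneg_general hdA hdB N hTP lam S V hObj h2 h4
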